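/- arXiv:math/9812166 — 2 statements merged into one kernel-verified Lean document; each statement's English description precedes it below -/
import Mathlib

section
/- Let E be an entire function such that conj(E(conj z)) = ε·E(z−i) for all z ∈ ℂ, for some constant ε with |ε| = 1, and let w ∈ ℂ satisfy E(w) = 0. Then for every z ∈ ℂ with z ≠ conj(w) − i, the identity conj(E(w+i))·K_E(w, z+i) = −conj(E(w−i))·K_E(w+i, z) holds. -/
open Complex ComplexConjugate

/-- The de Branges reproducing kernel associated with an entire function `E`. -/
noncomputable def KE (E : ℂ → ℂ) (w z : ℂ) : ℂ :=
  (E z * conj (E w) - conj (E (conj z)) * E (conj w)) / (2 * Real.pi * I * (conj w - z))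

/-
Both kernels collapse to a single term: `E w = 0` kills the first term of `K_E(w, z + i)`,
and the functional equation moves this zero to `conj w - i = conj (w + i)`, which kills the
second term of `K_E(w + i, z)`. The functional equation also turns the surviving factors into
`E z · conj (E (w - i))` and `E z · conj (E (w + i))`, over the common denominator
`2πi (conj w - i - z)`.
-/

lemma KE_of_apply_eq_zero {E : ℂ → ℂ} {w : ℂ} (hw : E w = 0) (z : ℂ) :
    KE E w z = -(conj (E (conj z)) * E (conj w)) / (2 * Real.pi * I * (conj w - z)) := by
  simp [KE, hw]

lemma KE_of_apply_conj_eq_zero {E : ℂ → ℂ} {w : ℂ} (hw : E (conj w) = 0) (z : ℂ) :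
    KE E w z = E z * conj (E w) / (2 * Real.pi * I * (conj w - z)) := by
  simp [KE, hw]

section FunctionalEquation

variable {E : ℂ → ℂ} {ε : ℂ} (hfe : ∀ z : ℂ, conj (E (conj z)) = ε * E (z - I))
include hfe

lemma conj_apply_conj_add_I (z : ℂ) : conj (E (conj (z + I))) = ε * E z := by
  simpa using hfe (z + I)

lemma apply_conj_sub_I_eq_zero (hε : ε ≠ 0) {w : ℂ} (hw : E w = 0) : E (conj w - I) = 0 := by
  simpa [hw, hε] using hfe (conj w)

lemma mul_apply_conj (hε : ‖ε‖ = 1) (w : ℂ) : ε * E (conj w) = conj (E (w - I)) := by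
  have h : E (conj w) = conj ε * conj (E (w - I)) := by
    simpa using congrArg conj (hfe w)
  rw [h, ← mul_assoc, mul_conj', hε]
  simp

end FunctionalEquation

theorem stmt_4_general (E : ℂ → ℂ) (ε : ℂ)
    (hε : ‖ε‖ = 1)
    (hfe : ∀ z : ℂ, conj (E (conj z)) = ε * E (z - I))
    (w : ℂ) (hw : E w = 0) :
    ∀ z : ℂ, z ≠ conj w - I →
      conj (E (w + I)) * KE E w (z + I) = -conj (E (w - I)) * KE E (w + I) z := by
  intro z _
  have hε0 : ε ≠ 0 := norm_ne_zero_iff.mp (by rw [hε]; exact one_ne_zero)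
  have hconj : conj (w + I) = conj w - I := by simp [sub_eq_add_neg]
  have hzero : E (conj (w + I)) = 0 := hconj ▸ apply_conj_sub_I_eq_zero hfe hε0 hw
  rw [KE_of_apply_eq_zero hw, KE_of_apply_conj_eq_zero hzero, conj_apply_conj_add_I hfe,
    hconj, ← mul_apply_conj hfe hε, show conj w - (z + I) = conj w - I - z by ring]
  ring

theorem stmt_4 (E : ℂ → ℂ) (ε : ℂ)
    (hE : Differentiable ℂ E)
    (hε : ‖ε‖ = 1)
    (hfe : ∀ z : ℂ, conj (E (conj z)) = ε * E (z - I))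
    (w : ℂ) (hw : E w = 0) :
    ∀ z : ℂ, z ≠ conj w - I →
      conj (E (w + I)) * KE E w (z + I) = -conj (E (w - I)) * KE E (w + I) z :=
  stmt_4_general E ε hε hfe w hw
end

section
/- Let B be a function analytic on the upper half-plane Im z > 0 with |B(z)| ≤ 1 there. Assume that for every positive integer r, all points w₁,…,w_r with Im w_α > 0, and all complex numbers c₁,…,c_r, the sum ∑_{α,β=1}^r c_α·conj(c_β)·(1 − B(w_α)·conj(B(w_β)))/(2πi(conj(w_β) − w_α − i)) is a nonnegative real number. Then B has an analytic continuation to the half-plane Im z > −1/2 satisfying |B(z)| ≤ 1 for all z with Im z > −1/2. -/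
/-!
Put `e_w(t) = exp ((i w - 1/2) t)` in `L²(0, ∞)` for `Im w > -1/2`. Then
`⟪e_v, e_w⟫ = 1 / (i (conj v - w - i))`, so the positivity of the kernel says exactly that
`e_w ↦ B(w) e_w` (`Im w > 0`) extends to a contraction `T` on the span of these vectors.
The vectors `v_n = (T^n)^* e_i` satisfy `‖v_n‖ ≤ ‖e_i‖` and `⟪v_n, e_w⟫ = B(w)^n / (2 - i w)`,
while `z ↦ ⟪v, e_z⟫` is a Laplace transform, holomorphic on all of `Im z > -1/2`.
Hence `g(z) = (2 - i z) ⟪v_1, e_z⟫` extends `B`; by the identity theorem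
`g(z)^n = (2 - i z) ⟪v_n, e_z⟫`, which is bounded in `n`, so `|g(z)| ≤ 1`.
-/

open Complex ComplexConjugate MeasureTheory Set Filter
open scoped ComplexOrder InnerProductSpace UpperHalfPlane

section Hilbert

variable {𝕜 E : Type*} [RCLike 𝕜] [NormedAddCommGroup E] [InnerProductSpace 𝕜 E]

theorem exists_strongDual_comp_eq_of_norm_le {M : Type*} [AddCommGroup M] [Module 𝕜 M]
    (Φ : M →ₗ[𝕜] E) (ℓ : M →ₗ[𝕜] 𝕜) {C : ℝ} (hC : 0 ≤ C) (h : ∀ m, ‖ℓ m‖ ≤ C * ‖Φ m‖) :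
    ∃ G : StrongDual 𝕜 E, ‖G‖ ≤ C ∧ ∀ m, G (Φ m) = ℓ m := by
  have hker : LinearMap.ker Φ ≤ LinearMap.ker ℓ := fun m hm => by
    simpa [LinearMap.mem_ker.mp hm] using h m
  let L : LinearMap.range Φ →ₗ[𝕜] 𝕜 :=
    (LinearMap.ker Φ).liftQ ℓ hker ∘ₗ Φ.quotKerEquivRange.symm.toLinearMap
  have hL : ∀ m, L ⟨Φ m, LinearMap.mem_range_self Φ m⟩ = ℓ m := fun m => by
    simp [L, LinearMap.quotKerEquivRange_symm_apply_image]
  have hL_le : ∀ x, ‖L x‖ ≤ C * ‖x‖ := by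
    rintro ⟨_, m, rfl⟩
    simpa [hL] using h m
  obtain ⟨G, hGL, hG⟩ := exists_extension_norm_eq _ (L.mkContinuous C hL_le)
  exact ⟨G, hG ▸ L.mkContinuous_norm_le hC hL_le, fun m => (hGL ⟨Φ m, _⟩).trans (hL m)⟩

theorem coe_norm_sum_smul_sq {ι : Type*} (s : Finset ι) (d : ι → 𝕜) (x : ι → E) :
    (‖∑ i ∈ s, d i • x i‖ : 𝕜) ^ 2 = ∑ i ∈ s, ∑ j ∈ s, d i * conj (d j) * ⟪x j, x i⟫_𝕜 := by
  rw [← inner_self_eq_norm_sq_to_K, sum_inner, Finset.sum_comm]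
  simp only [inner_sum, inner_smul_left, inner_smul_right]
  exact Finset.sum_congr rfl fun i _ => Finset.sum_congr rfl fun j _ => by ring

def IsDiagonalContraction {ι : Type*} (x : ι → E) (b : ι → 𝕜) : Prop :=
  ∀ (s : Finset ι) (c : ι → 𝕜), ‖∑ i ∈ s, (c i * b i) • x i‖ ≤ ‖∑ i ∈ s, c i • x i‖

namespace IsDiagonalContraction

variable {ι : Type*} {x : ι → E} {b : ι → 𝕜}

theorem pow (h : IsDiagonalContraction x b) (n : ℕ) : IsDiagonalContraction x (b ^ n) := by
  induction n with
  | zero => simp [IsDiagonalContraction]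
  | succ n ih =>
    intro s c
    calc ‖∑ i ∈ s, (c i * (b ^ (n + 1)) i) • x i‖ = ‖∑ i ∈ s, ((c i * b i) * (b ^ n) i) • x i‖ := by
          simp only [Pi.pow_apply, pow_succ', mul_assoc]
      _ ≤ ‖∑ i ∈ s, (c i * b i) • x i‖ := ih s _
      _ ≤ ‖∑ i ∈ s, c i • x i‖ := h s c

-- `v = T⋆ y` for the contraction `T : x i ↦ b i • x i`, obtained via Hahn–Banach and Riesz.
theorem exists_norm_le_inner_eq_mul [CompleteSpace E] (h : IsDiagonalContraction x b) (y : E) :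
    ∃ v : E, ‖v‖ ≤ ‖y‖ ∧ ∀ i, ⟪v, x i⟫_𝕜 = b i * ⟪y, x i⟫_𝕜 := by
  classical
  let Φ := Finsupp.linearCombination 𝕜 x
  let ℓ := innerₛₗ 𝕜 y ∘ₗ Finsupp.linearCombination 𝕜 (fun i => b i • x i)
  have hℓ : ∀ c, ‖ℓ c‖ ≤ ‖y‖ * ‖Φ c‖ := fun c => by
    refine (norm_inner_le_norm _ _).trans (mul_le_mul_of_nonneg_left ?_ (norm_nonneg y))
    simpa [Φ, Finsupp.linearCombination_apply, Finsupp.sum, smul_smul] using h c.support c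
  obtain ⟨G, hG, hGΦ⟩ := exists_strongDual_comp_eq_of_norm_le Φ ℓ (norm_nonneg y) hℓ
  refine ⟨(InnerProductSpace.toDual 𝕜 E).symm G, by simpa using hG, fun i => ?_⟩
  rw [InnerProductSpace.toDual_symm_apply]
  simpa [Φ, ℓ, inner_smul_right] using hGΦ (Finsupp.single i 1)

theorem of_kernel_nonneg (h : ∀ (s : Finset ι) (c : ι → 𝕜),
      0 ≤ ∑ i ∈ s, ∑ j ∈ s, c i * conj (c j) * ((1 - b i * conj (b j)) * ⟪x j, x i⟫_𝕜)) :
    IsDiagonalContraction x b := by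
  intro s c
  have hsum : ∑ i ∈ s, ∑ j ∈ s, c i * conj (c j) * ((1 - b i * conj (b j)) * ⟪x j, x i⟫_𝕜) =
      ((‖∑ i ∈ s, c i • x i‖ ^ 2 - ‖∑ i ∈ s, (c i * b i) • x i‖ ^ 2 : ℝ) : 𝕜) := by
    push_cast
    rw [coe_norm_sum_smul_sq, coe_norm_sum_smul_sq, ← Finset.sum_sub_distrib]
    refine Finset.sum_congr rfl fun i _ => ?_
    rw [← Finset.sum_sub_distrib]
    exact Finset.sum_congr rfl fun j _ => by simp only [map_mul]; ring
  have := h s c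
  rw [hsum, RCLike.ofReal_nonneg, sub_nonneg] at this
  exact pow_le_pow_iff_left₀ (norm_nonneg _) (norm_nonneg _) two_ne_zero |>.mp this

end IsDiagonalContraction

end Hilbert

theorem differentiableOn_integral_mul_cexp {f : ℝ → ℂ} {σ : ℝ}
    (hf : ∀ a : ℂ, a.re < σ → IntegrableOn (fun t : ℝ => f t * cexp (a * t)) (Ioi 0)) :
    DifferentiableOn ℂ (fun a : ℂ => ∫ t in Ioi 0, f t * cexp (a * t)) {a | a.re < σ} := by
  intro a₀ (ha₀ : a₀.re < σ)
  set δ := (σ - a₀.re) / 3 with hδ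
  have hδ_pos : 0 < δ := by linarith
  have hball : ∀ a ∈ Metric.ball a₀ δ, a.re < a₀.re + δ := fun a ha => by
    have := (re_le_norm (a - a₀)).trans_lt (mem_ball_iff_norm.mp ha)
    rw [sub_re] at this
    linarith
  have hdom := (hf ((a₀.re + 2 * δ : ℝ) : ℂ) (by rw [ofReal_re]; linarith)).norm.const_mul δ⁻¹
  refine (hasDerivAt_integral_of_dominated_loc_of_deriv_le (Metric.ball_mem_nhds a₀ hδ_pos)
    (F' := fun a t => t * (f t * cexp (a * t)))
    (eventually_of_mem (Metric.ball_mem_nhds a₀ hδ_pos) fun a ha =>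
      (hf a (by linarith [hball a ha])).aestronglyMeasurable)
    (hf a₀ ha₀) (continuous_ofReal.aestronglyMeasurable.mul (hf a₀ ha₀).aestronglyMeasurable)
    ?_ hdom ?_).2.differentiableAt.differentiableWithinAt
  · filter_upwards [ae_restrict_mem measurableSet_Ioi] with t (ht : 0 < t) a ha
    have ht_le : t ≤ δ⁻¹ * Real.exp (δ * t) := by
      rw [le_inv_mul_iff₀ hδ_pos]
      linarith [Real.add_one_le_exp (δ * t)]
    have hexp : Real.exp (a.re * t) ≤ Real.exp ((a₀.re + δ) * t) := by
      gcongr; exact (hball a ha).le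
    simp only [norm_mul, norm_real, Real.norm_eq_abs, abs_of_pos ht, norm_exp, mul_re, ofReal_re,
      ofReal_im, mul_zero, sub_zero]
    calc t * (‖f t‖ * Real.exp (a.re * t))
        ≤ δ⁻¹ * Real.exp (δ * t) * (‖f t‖ * Real.exp ((a₀.re + δ) * t)) := by gcongr
      _ = δ⁻¹ * (‖f t‖ * Real.exp ((a₀.re + 2 * δ) * t)) := by
        rw [mul_assoc, mul_left_comm (Real.exp _), ← Real.exp_add]; ring_nf
  · refine ae_of_all _ fun t a _ => ?_
    exact (((hasDerivAt_id a).mul_const (t : ℂ)).cexp.const_mul (f t)).congr_deriv (by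
      simp only [id, one_mul]; ring)

local notation "L²₊" => Lp ℂ 2 (volume.restrict (Ioi (0 : ℝ)))

theorem memLp_two_cexp_mul {a : ℂ} (ha : a.re < 0) :
    MemLp (fun t : ℝ => cexp (a * t)) 2 (volume.restrict (Ioi 0)) := by
  refine (memLp_two_iff_integrable_sq_norm (by fun_prop)).2 ?_
  have h2a : (2 * a).re < 0 := by
    simp only [mul_re, re_ofNat, im_ofNat, zero_mul, sub_zero]; linarith
  refine (integrableOn_exp_mul_complex_Ioi h2a 0).norm.congr ?_
  refine ae_of_all _ fun t => ?_
  simp [norm_exp, ← Real.exp_nat_mul, mul_assoc]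

-- Junk value `0` off the half-plane `a.re < 0`, where `exp (a t)` is not square integrable.
noncomputable def expL2 (a : ℂ) : L²₊ :=
  if ha : a.re < 0 then (memLp_two_cexp_mul ha).toLp _ else 0

theorem coeFn_expL2 {a : ℂ} (ha : a.re < 0) :
    expL2 a =ᵐ[volume.restrict (Ioi 0)] fun t : ℝ => cexp (a * t) := by
  rw [expL2, dif_pos ha]
  exact MemLp.coeFn_toLp _

theorem inner_expL2_eq_integral (v : L²₊) {a : ℂ} (ha : a.re < 0) :
    ⟪v, expL2 a⟫_ℂ = ∫ t in Ioi 0, conj (v t) * cexp (a * t) := by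
  rw [L2.inner_def]
  refine integral_congr_ae ?_
  filter_upwards [coeFn_expL2 ha] with t ht
  rw [ht, RCLike.inner_apply']

theorem inner_expL2_expL2 {a b : ℂ} (ha : a.re < 0) (hb : b.re < 0) :
    ⟪expL2 a, expL2 b⟫_ℂ = -(conj a + b)⁻¹ := by
  have hab : (conj a + b).re < 0 := by rw [add_re, conj_re]; linarith
  calc ⟪expL2 a, expL2 b⟫_ℂ = ∫ t : ℝ in Ioi 0, cexp ((conj a + b) * t) := by
        rw [inner_expL2_eq_integral _ hb]
        refine integral_congr_ae ?_
        filter_upwards [coeFn_expL2 ha] with t ht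
        rw [ht, ← exp_conj, ← exp_add, map_mul, conj_ofReal, add_mul]
    _ = -(conj a + b)⁻¹ := by
        rw [integral_exp_mul_complex_Ioi hab]; simp [div_eq_mul_inv]

theorem differentiableOn_inner_expL2 (v : L²₊) :
    DifferentiableOn ℂ (fun a => ⟪v, expL2 a⟫_ℂ) {a | a.re < 0} := by
  have hint : ∀ a : ℂ, a.re < 0 → IntegrableOn (fun t : ℝ => conj (v t) * cexp (a * t)) (Ioi 0) :=
    fun a ha => (L2.integrable_inner v (expL2 a)).congr <| by
      filter_upwards [coeFn_expL2 ha] with t ht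
      rw [ht, RCLike.inner_apply']
  exact (differentiableOn_integral_mul_cexp hint).congr fun a ha => inner_expL2_eq_integral v ha

-- Up to the factor `2π`, the Szegő kernels of the half-plane `Im z > -1/2`, seen in `L²(0, ∞)`
-- through the Paley–Wiener transform.
noncomputable def szego (w : ℂ) : L²₊ := expL2 (I * w - 1 / 2)

theorem re_I_mul_sub_half_neg {w : ℂ} (hw : -(1 / 2) < w.im) : (I * w - 1 / 2).re < 0 := by
  rw [show (I * w - 1 / 2).re = -w.im - 1 / 2 by simp]; linarith

theorem inner_szego_szego {v w : ℂ} (hv : -(1 / 2) < v.im) (hw : -(1 / 2) < w.im) :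
    ⟪szego v, szego w⟫_ℂ = (I * (conj v - w - I))⁻¹ := by
  rw [szego, szego, inner_expL2_expL2 (re_I_mul_sub_half_neg hv) (re_I_mul_sub_half_neg hw),
    neg_inv]
  congr 1
  simp only [map_sub, map_mul, conj_I, map_div₀, map_one, map_ofNat]
  ring_nf; rw [I_sq]; ring

theorem inner_szego_I_szego {z : ℂ} (hz : -(1 / 2) < z.im) :
    ⟪szego I, szego z⟫_ℂ = (2 - I * z)⁻¹ := by
  rw [inner_szego_szego (by rw [I_im]; norm_num) hz, conj_I]
  ring_nf; rw [I_sq]; ring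

theorem differentiableOn_inner_szego (v : L²₊) :
    DifferentiableOn ℂ (fun z => ⟪v, szego z⟫_ℂ) {z | -(1 / 2) < z.im} :=
  (differentiableOn_inner_expL2 v).comp (by fun_prop) fun _ hz => re_I_mul_sub_half_neg hz

theorem isDiagonalContraction_szego {B : ℂ → ℂ}
    (hpos : ∀ r : ℕ, 0 < r → ∀ w : Fin r → ℂ, (∀ α, 0 < (w α).im) → ∀ c : Fin r → ℂ,
      0 ≤ ∑ α, ∑ β, c α * conj (c β) *
        ((1 - B (w α) * conj (B (w β))) / (2 * Real.pi * I * (conj (w β) - w α - I)))) :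
    IsDiagonalContraction (fun w : ℍ => szego w) (fun w : ℍ => B w) := by
  refine IsDiagonalContraction.of_kernel_nonneg fun s c => ?_
  rcases s.eq_empty_or_nonempty with rfl | hs
  · simp
  have sum_fin : ∀ f : ℍ → ℂ, ∑ k, f (s.equivFin.symm k) = ∑ w ∈ s, f w := fun f => by
    rw [← s.sum_coe_sort f]; exact s.equivFin.symm.sum_comp (fun w => f w)
  have key := hpos s.card hs.card_pos (fun k => s.equivFin.symm k)
    (fun k => (s.equivFin.symm k : ℍ).coe_im_pos) (fun k => c (s.equivFin.symm k))
  have hterm : ∀ v w : ℍ, (1 - B v * conj (B w)) * ⟪szego w, szego v⟫_ℂ =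
      2 * Real.pi * ((1 - B v * conj (B w)) / (2 * Real.pi * I * (conj (w : ℂ) - v - I))) := by
    intro v w
    rw [inner_szego_szego (by linarith [w.coe_im_pos]) (by linarith [v.coe_im_pos])]
    field_simp
  convert mul_nonneg (by exact_mod_cast Real.two_pi_pos.le : (0 : ℂ) ≤ 2 * Real.pi) key using 1
  rw [← sum_fin, Finset.mul_sum]
  refine Fintype.sum_congr _ _ fun α => ?_
  rw [← sum_fin, Finset.mul_sum]
  refine Fintype.sum_congr _ _ fun β => ?_
  rw [hterm]; ring

theorem eqOn_setOf_lt_im_of_eqOn {f g : ℂ → ℂ} {a b : ℝ} (hab : a ≤ b)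
    (hf : DifferentiableOn ℂ f {z | a < z.im}) (hg : DifferentiableOn ℂ g {z | a < z.im})
    (hfg : EqOn f g {z | b < z.im}) : EqOn f g {z | a < z.im} := by
  have hopen : ∀ c : ℝ, IsOpen {z : ℂ | c < z.im} := fun c =>
    isOpen_lt continuous_const continuous_im
  have hz₀ : ((b + 1 : ℝ) * I : ℂ) ∈ {z : ℂ | b < z.im} := by simp
  exact (hf.analyticOnNhd (hopen a)).eqOn_of_preconnected_of_eventuallyEq
    (hg.analyticOnNhd (hopen a)) (convex_halfSpace_im_gt a).isPreconnected
    (hab.trans_lt hz₀) (eventually_of_mem ((hopen b).mem_nhds hz₀) hfg)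

theorem le_one_of_forall_pow_le {x C : ℝ} (h : ∀ n : ℕ, x ^ n ≤ C) : x ≤ 1 := by
  by_contra! hx
  obtain ⟨n, hn⟩ := pow_unbounded_of_one_lt C hx
  exact (h n).not_gt hn

theorem stmt_7_general (B : ℂ → ℂ)
    (hpos : ∀ r : ℕ, 0 < r → ∀ w : Fin r → ℂ, (∀ α, 0 < (w α).im) → ∀ c : Fin r → ℂ,
      0 ≤ ∑ α, ∑ β, c α * conj (c β) *
        ((1 - B (w α) * conj (B (w β))) / (2 * Real.pi * I * (conj (w β) - w α - I)))) :
    ∃ g : ℂ → ℂ, DifferentiableOn ℂ g {z : ℂ | -(1 / 2) < z.im} ∧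
      (∀ z : ℂ, 0 < z.im → g z = B z) ∧
      ∀ z : ℂ, -(1 / 2) < z.im → ‖g z‖ ≤ 1 := by
  choose v hv_norm hv_inner using fun n =>
    ((isDiagonalContraction_szego hpos).pow n).exists_norm_le_inner_eq_mul (szego I)
  set F : ℕ → ℂ → ℂ := fun n z => (2 - I * z) * ⟪v n, szego z⟫_ℂ
  have hF_diff : ∀ n, DifferentiableOn ℂ (F n) {z | -(1 / 2) < z.im} := fun n =>
    (by fun_prop : Differentiable ℂ fun z : ℂ => 2 - I * z).differentiableOn.mul
      (differentiableOn_inner_szego _)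
  have hF_upper : ∀ n z, 0 < z.im → F n z = B z ^ n := fun n z hz => by
    have hne : (2 : ℂ) - I * z ≠ 0 := by
      refine ne_of_apply_ne re ?_
      rw [show (2 - I * z).re = 2 + z.im by simp, zero_re]; linarith
    simp only [F, hv_inner n ⟨z, hz⟩, Pi.pow_apply]
    rw [inner_szego_I_szego (by linarith), mul_left_comm, mul_inv_cancel₀ hne, mul_one]
  have hF_pow : ∀ n, EqOn (F n) (fun z => F 1 z ^ n) {z | -(1 / 2) < z.im} := fun n =>
    eqOn_setOf_lt_im_of_eqOn (b := 0) (by norm_num) (hF_diff n) ((hF_diff 1).pow n) fun z hz => by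
      simp [hF_upper _ z hz]
  refine ⟨F 1, hF_diff 1, fun z hz => by simpa using hF_upper 1 z hz, fun z hz => ?_⟩
  refine le_one_of_forall_pow_le (C := ‖2 - I * z‖ * (‖szego I‖ * ‖szego z‖)) fun n => ?_
  calc ‖F 1 z‖ ^ n = ‖F n z‖ := by rw [← norm_pow, hF_pow n hz]
    _ ≤ ‖2 - I * z‖ * (‖v n‖ * ‖szego z‖) := by
      simp only [F, norm_mul]; gcongr; exact norm_inner_le_norm _ _
    _ ≤ ‖2 - I * z‖ * (‖szego I‖ * ‖szego z‖) := by gcongr; exact hv_norm n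

theorem stmt_7 (B : ℂ → ℂ)
    (hB : DifferentiableOn ℂ B {z : ℂ | 0 < z.im})
    (hB1 : ∀ z : ℂ, 0 < z.im → ‖B z‖ ≤ 1)
    (hpos : ∀ r : ℕ, 0 < r → ∀ w : Fin r → ℂ, (∀ α, 0 < (w α).im) → ∀ c : Fin r → ℂ,
      0 ≤ ∑ α, ∑ β, c α * conj (c β) *
        ((1 - B (w α) * conj (B (w β))) / (2 * Real.pi * I * (conj (w β) - w α - I)))) :
    ∃ g : ℂ → ℂ, DifferentiableOn ℂ g {z : ℂ | -(1 / 2) < z.im} ∧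
      (∀ z : ℂ, 0 < z.im → g z = B z) ∧
      ∀ z : ℂ, -(1 / 2) < z.im → ‖g z‖ ≤ 1 :=
  stmt_7_general B hpos
end
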